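/- Fusion interacts with merge: if T1 ⊔ T2 is defined, then for every local type T, (T1 ⋈ T) ⊔ (T2 ⋈ T) is defined and equals (T1 ⊔ T2) ⋈ T, provided T ⊔ T = T holds (e.g. when T ends every continuation identically). -/

import Mathlib

/-- Local types T ::= end | base B | p?{lᵢ⟨Uᵢ⟩.Tᵢ} | p!{lᵢ⟨Uᵢ⟩.Tᵢ} | ∀α.T | ∃α.T | @_ω T | ↓α.T.
Payload types U (base types or local types) are embedded via `base`; a branch is a
triple (label, payload, continuation). -/
inductive LocalTy where
  | endT : LocalTy
  | base : String → LocalTy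
  | recv : String → List (String × LocalTy × LocalTy) → LocalTy
  | send : String → List (String × LocalTy × LocalTy) → LocalTy
  | all  : String → LocalTy → LocalTy
  | ex   : String → LocalTy → LocalTy
  | att  : String → LocalTy → LocalTy
  | here : String → LocalTy → LocalTy

mutual
/-- Fusion T1 ⋈ T2: end ⋈ T = T, and otherwise T2 is pushed under the outermost
constructor of T1, recursing into every continuation. -/
def fuse : LocalTy → LocalTy → LocalTy
  | .endT, T => T
  | .base b, _ => .base b
  | .recv p bs, T => .recv p (fuseBrs bs T)
  | .send p bs, T => .send p (fuseBrs bs T)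
  | .all a S, T => .all a (fuse S T)
  | .ex a S, T => .ex a (fuse S T)
  | .att w S, T => .att w (fuse S T)
  | .here a S, T => .here a (fuse S T)

def fuseBrs : List (String × LocalTy × LocalTy) → LocalTy → List (String × LocalTy × LocalTy)
  | [], _ => []
  | (l, U, S) :: bs, T => (l, U, fuse S T) :: fuseBrs bs T
end

mutual
/-- The partial merge operator: `Merge T1 T2 T` means T1 ⊔ T2 is defined and equals T.
It is the identity on equal base, terminated, selection, @, ∀, ∃ types; on two
branching types with the same source participant it takes the union of the branches,
recursively merging payload and continuation on common labels; undefined otherwise. -/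
inductive Merge : LocalTy → LocalTy → LocalTy → Prop where
  | endT : Merge .endT .endT .endT
  | base (b : String) : Merge (.base b) (.base b) (.base b)
  | send (p : String) (bs : List (String × LocalTy × LocalTy)) :
      Merge (.send p bs) (.send p bs) (.send p bs)
  | all (a : String) (T : LocalTy) : Merge (.all a T) (.all a T) (.all a T)
  | ex (a : String) (T : LocalTy) : Merge (.ex a T) (.ex a T) (.ex a T)
  | att (w : String) (T : LocalTy) : Merge (.att w T) (.att w T) (.att w T)
  | recv {p bs1 bs2 bs3} : MergeBrs bs1 bs2 bs3 →
      Merge (.recv p bs1) (.recv p bs2) (.recv p bs3)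

/-- Merge of branch lists: branches of the left list with labels not in the right
list are kept; common labels are merged recursively; remaining right branches kept. -/
inductive MergeBrs : List (String × LocalTy × LocalTy) → List (String × LocalTy × LocalTy) →
    List (String × LocalTy × LocalTy) → Prop where
  | nil (bs : List (String × LocalTy × LocalTy)) : MergeBrs [] bs bs
  | uniq {l U T bs1 bs2 bs3} :
      (∀ U' T', (l, U', T') ∉ bs2) → MergeBrs bs1 bs2 bs3 →
      MergeBrs ((l, U, T) :: bs1) bs2 ((l, U, T) :: bs3)
  | common {l U1 T1 U2 T2 U T bs1 bs2 bs3} :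
      (l, U2, T2) ∈ bs2 → Merge U1 U2 U → Merge T1 T2 T →
      MergeBrs bs1 (bs2.eraseP (fun x => x.1 == l)) bs3 →
      MergeBrs ((l, U1, T1) :: bs1) bs2 ((l, U, T) :: bs3)
end

/-!
Fusion only replaces the `end` leaves of its left argument by `T` and leaves labels and payloads
untouched. Hence a merge derivation of `T1 ⊔ T2` transports constructor by constructor to the
fused types, and the only new obligation, at a common `end` leaf, is exactly `T ⊔ T = T`.
-/

def fuseBranch (T : LocalTy) (b : String × LocalTy × LocalTy) : String × LocalTy × LocalTy :=
  (b.1, b.2.1, fuse b.2.2 T)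

lemma fuseBrs_eq_map (bs : List (String × LocalTy × LocalTy)) (T : LocalTy) :
    fuseBrs bs T = bs.map (fuseBranch T) := by
  induction bs with
  | nil => rfl
  | cons b bs ih => rw [List.map_cons, ← ih]; rfl

lemma mem_fuseBrs {l U S bs} (T : LocalTy) (h : (l, U, S) ∈ bs) :
    (l, U, fuse S T) ∈ fuseBrs bs T := by
  rw [fuseBrs_eq_map]
  exact List.mem_map_of_mem h

lemma not_mem_fuseBrs {l bs} (T : LocalTy) (h : ∀ U S, (l, U, S) ∉ bs) (U S : LocalTy) :
    (l, U, S) ∉ fuseBrs bs T := by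
  rw [fuseBrs_eq_map, List.mem_map]
  rintro ⟨⟨l', U', S'⟩, hmem, heq⟩
  cases heq
  exact h U' S' hmem

lemma fuseBrs_eraseP_label (l : String) (bs : List (String × LocalTy × LocalTy)) (T : LocalTy) :
    fuseBrs (bs.eraseP (fun x => x.1 == l)) T
      = (fuseBrs bs T).eraseP (fun x => x.1 == l) := by
  simp only [fuseBrs_eq_map, List.eraseP_map]
  rfl

/-- fusion interacts with merge: if T1 ⊔ T2 is defined, then for every
local type T with T ⊔ T = T, (T1 ⋈ T) ⊔ (T2 ⋈ T) is defined and equals (T1 ⊔ T2) ⋈ T. -/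
theorem fuse_merge (T1 T2 T12 T : LocalTy)
    (h : Merge T1 T2 T12) (hT : Merge T T T) :
    Merge (fuse T1 T) (fuse T2 T) (fuse T12 T) := by
  induction h using Merge.rec
    (motive_2 := fun bs1 bs2 bs3 _ =>
      MergeBrs (fuseBrs bs1 T) (fuseBrs bs2 T) (fuseBrs bs3 T)) with
  | endT => exact hT
  | base b => exact .base b
  | send p bs => exact .send p (fuseBrs bs T)
  | all a S => exact .all a (fuse S T)
  | ex a S => exact .ex a (fuse S T)
  | att w S => exact .att w (fuse S T)
  | recv _ ih => exact .recv ih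
  | nil bs => exact .nil (fuseBrs bs T)
  | uniq hfresh _ ih => exact .uniq (not_mem_fuseBrs T hfresh) ih
  | common hmem hU _ _ _ ihT ihB =>
    exact .common (mem_fuseBrs T hmem) hU ihT (fuseBrs_eraseP_label .. ▸ ihB)
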